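/- In the doubling setting, comodule-coalgebra compatibility holds: for every (t, s) with s a pruning of t, (I ⊗ χ) ∘ Δ(t,s) = (m^{13} ⊗ I) ∘ (Δ ⊗ Δ) ∘ χ(t,s), where χ is the unshuffling coproduct of S(V), Δ(t,s) = Σ_{c ∈ Adm(s)} (t, P^c(s)) ⊗ (R^c(t), R^c(s)), and m^{13} multiplies the first and third tensor factors. -/

import Mathlib

open scoped TensorProduct

/-- Planar rooted trees: a tree is a root together with a list of subtrees. -/
inductive RTree : Type where
  | node : List RTree → RTree

instance : Inhabited RTree := ⟨.node []⟩

namespace RTree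

-- An injective code of a planar rooted tree.
mutual
  def code : RTree → List ℕ
    | .node ts => ts.length :: codeL ts
  def codeL : List RTree → List ℕ
    | [] => []
    | t :: ts => code t ++ codeL ts
end

/-- Lexicographic comparison of codes. -/
def lleb : List ℕ → List ℕ → Bool
  | [], _ => true
  | _ :: _, [] => false
  | a :: as, b :: bs => decide (a < b) || (decide (a = b) && lleb as bs)

-- Normal form of a rooted tree: recursively sort the lists of subtrees.
-- Two planar trees represent the same abstract rooted tree iff they have the
-- same normal form.
mutual
  def norm : RTree → RTree
    | .node ts => .node ((normL ts).mergeSort fun a b => lleb (code a) (code b))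
  def normL : List RTree → List RTree
    | [] => []
    | t :: ts => norm t :: normL ts
end

-- Number of vertices.
mutual
  def size : RTree → ℕ
    | .node ts => 1 + sizeL ts
  def sizeL : List RTree → ℕ
    | [] => 0
    | t :: ts => size t + sizeL ts
end

-- Vertices of a tree, as positions (paths of child indices from the root).
mutual
  def vertices : RTree → List (List ℕ)
    | .node ts => [] :: verticesL 0 ts
  def verticesL : ℕ → List RTree → List (List ℕ)
    | _, [] => []
    | i, t :: ts => (vertices t).map (i :: ·) ++ verticesL (i + 1) ts
end

/-- `graftAt t p s` grafts the root of `t` on the vertex at position `p` of `s`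
(the new subtree is appended at the end, so positions of `s` are unchanged). -/
def graftAt (t : RTree) : List ℕ → RTree → RTree
  | [], .node ts => .node (ts ++ [t])
  | i :: q, .node ts =>
      .node (ts.set i (graftAt t q (ts.getD i (.node []))))

end RTree

/-- Abstract rooted trees: planar trees up to sibling permutation. -/
instance treeSetoid : Setoid RTree :=
  ⟨fun a b => a.norm = b.norm, ⟨fun _ => rfl, Eq.symm, Eq.trans⟩⟩

abbrev TreeQ := Quotient treeSetoid

def tq (t : RTree) : TreeQ := Quotient.mk treeSetoid t

/-- A forest, as a multiset of abstract rooted trees. -/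
def forestQ (l : List RTree) : Multiset TreeQ := (l.map tq : List TreeQ)

/-- The vector space `T` spanned by rooted trees. -/
abbrev TM := TreeQ →₀ ℚ

noncomputable def δT (t : RTree) : TM := Finsupp.single (tq t) 1

/-- `t → s`: the sum of all graftings of `t` on the vertices of `s`. -/
noncomputable def graftSum (t s : RTree) : TM :=
  ((RTree.vertices s).map fun p => δT (RTree.graftAt t p s)).sum

/-- The bilinear extension of the grafting product to `T`. -/
noncomputable def pre (a b : TM) : TM :=
  a.sum fun q c => b.sum fun r d => (c * d) • graftSum q.out r.out
/-- Rooted trees with a set of marked ("cut") edges: each child edge carries a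
Boolean which is `true` iff the edge belongs to the cut. -/
inductive CTree : Type where
  | node : List (Bool × CTree) → CTree

instance : Inhabited CTree := ⟨.node []⟩

namespace CTree

-- The underlying tree `t`.
mutual
  def forget : CTree → RTree
    | .node ts => .node (forgetL ts)
  def forgetL : List (Bool × CTree) → List RTree
    | [] => []
    | (_, c) :: ts => forget c :: forgetL ts
end

-- A tree with no marked edge at all.
mutual
  def noMarks : CTree → Bool
    | .node ts => noMarksL ts
  def noMarksL : List (Bool × CTree) → Bool
    | [] => true
    | (b, c) :: ts => !b && noMarks c && noMarksL ts
end

-- Admissibility of the cut: no marked edge above another marked edge,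
-- i.e. every path from the root to a leaf contains at most one cut edge.
mutual
  def adm : CTree → Bool
    | .node ts => admL ts
  def admL : List (Bool × CTree) → Bool
    | [] => true
    | (b, c) :: ts => (if b then noMarks c else adm c) && admL ts
end

-- The pruning `P^c(t)`: the subforest above the cut.
mutual
  def pruneF : CTree → List RTree
    | .node ts => pruneFL ts
  def pruneFL : List (Bool × CTree) → List RTree
    | [] => []
    | (b, c) :: ts => (if b then [forget c] else pruneF c) ++ pruneFL ts
end

-- The trunk `R^c(t)`: the subtree below the cut (containing the root).
mutual
  def trunk : CTree → RTree
    | .node ts => .node (trunkL ts)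
  def trunkL : List (Bool × CTree) → List RTree
    | [] => []
    | (b, c) :: ts => (if b then [] else [trunk c]) ++ trunkL ts
end

-- All vertex positions of the underlying tree.
mutual
  def allPos : CTree → List (List ℕ)
    | .node ts => [] :: allPosL 0 ts
  def allPosL : ℕ → List (Bool × CTree) → List (List ℕ)
    | _, [] => []
    | i, (_, c) :: ts => (allPos c).map (i :: ·) ++ allPosL (i + 1) ts
end

-- Positions of the vertices lying strictly above the cut (vertices of the pruning).
mutual
  def prunePos : CTree → List (List ℕ)
    | .node ts => prunePosL 0 ts
  def prunePosL : ℕ → List (Bool × CTree) → List (List ℕ)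
    | _, [] => []
    | i, (b, c) :: ts =>
        (if b then (allPos c).map (i :: ·) else (prunePos c).map (i :: ·)) ++
          prunePosL (i + 1) ts
end

-- Positions of the vertices of the trunk (not above the cut).
mutual
  def trunkPos : CTree → List (List ℕ)
    | .node ts => [] :: trunkPosL 0 ts
  def trunkPosL : ℕ → List (Bool × CTree) → List (List ℕ)
    | _, [] => []
    | i, (b, c) :: ts =>
        (if b then [] else (trunkPos c).map (i :: ·)) ++ trunkPosL (i + 1) ts
end

-- A plain tree viewed as a cut tree with no marks.
mutual
  def ofTree : RTree → CTree
    | .node ts => .node (ofTreeL ts)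
  def ofTreeL : List RTree → List (Bool × CTree)
    | [] => []
    | t :: ts => (false, ofTree t) :: ofTreeL ts
end

/-- `cgraft x p c` grafts the cut tree `x` (root edge unmarked) at the vertex
at position `p` of `c` (appended last, so positions of `c` are unchanged). -/
def cgraft (x : CTree) : List ℕ → CTree → CTree
  | [], .node ts => .node (ts ++ [(false, x)])
  | i :: q, .node ts =>
      .node (ts.set i
        ((ts.getD i (false, .node [])).1,
          cgraft x q (ts.getD i (false, .node [])).2))

-- injective code and normal form, as for plain trees
mutual
  def code : CTree → List ℕ
    | .node ts => ts.length :: codeL ts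
  def codeL : List (Bool × CTree) → List ℕ
    | [] => []
    | (b, c) :: ts => (if b then 1 else 0) :: (code c ++ codeL ts)
end

mutual
  def cnorm : CTree → CTree
    | .node ts =>
        .node ((cnormL ts).mergeSort fun a b =>
          RTree.lleb ((if a.1 then 1 else 0) :: code a.2) ((if b.1 then 1 else 0) :: code b.2))
  def cnormL : List (Bool × CTree) → List (Bool × CTree)
    | [] => []
    | (b, c) :: ts => (b, cnorm c) :: cnormL ts
end

end CTree

/-- Cut trees up to sibling permutation. -/
instance ctreeSetoid : Setoid CTree :=
  ⟨fun a b => a.cnorm = b.cnorm, ⟨fun _ => rfl, Eq.symm, Eq.trans⟩⟩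

abbrev CQ := Quotient ctreeSetoid

def cq (c : CTree) : CQ := Quotient.mk ctreeSetoid c
/-- The pair `(t, s)` (underlying tree, pruning) attached to a cut tree. -/
noncomputable def pairQ (c : CTree) : TreeQ × Multiset TreeQ :=
  (tq c.forget, forestQ c.pruneF)

/-- The module spanned by pairs (tree, forest); it contains the doubling
space `V` spanned by the pairs (tree, pruning of that tree). -/
abbrev MV := (TreeQ × Multiset TreeQ) →₀ ℚ

noncomputable def δV (c : CTree) : MV := Finsupp.single (pairQ c) 1

noncomputable def toMV (l : List CTree) : MV := (l.map δV).sum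

/-- `(t, s)` belongs to the doubling space `V`, i.e. `s` is the pruning of `t`
along some admissible cut. -/
def PairInV (p : TreeQ × Multiset TreeQ) : Prop :=
  ∃ c : CTree, c.adm = true ∧ pairQ c = p

/-- The doubling pre-Lie product `⤳` at the level of cut trees:
graft the first tree on each vertex of the second one which is not a
vertex of its pruning (i.e. on each trunk vertex). -/
def dmul (c₁ c₂ : CTree) : List CTree :=
  (CTree.trunkPos c₂).map fun p => CTree.cgraft c₁ p c₂

/-- The action `◇` of a tree on the doubling space: graft the tree on each
vertex of the pruning. -/
def dAct (t : RTree) (c : CTree) : List CTree :=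
  (CTree.prunePos c).map fun p => CTree.cgraft (CTree.ofTree t) p c

/-- `t → s` at list level: all graftings of `t` on vertices of `s`. -/
def rmulAll (t s : RTree) : List RTree :=
  (RTree.vertices s).map fun p => RTree.graftAt t p s

/-- All graftings of a tree on the vertices of a forest. -/
def fgraftAll (t : RTree) (f : List RTree) : List (List RTree) :=
  (List.range f.length).flatMap fun i =>
    (rmulAll t (f.getD i default)).map fun w => f.set i w

-- Admissible cuts of a tree/forest, with the associated (pruning, trunk).
mutual
  def treeCuts : RTree → List (List RTree × List RTree)
    | .node ts =>
        ([.node ts], []) ::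
          (forestCuts ts).map fun pr => (pr.1, [RTree.node pr.2])
  def forestCuts : List RTree → List (List RTree × List RTree)
    | [] => [([], [])]
    | t :: ts =>
        (treeCuts t).flatMap fun pr =>
          (forestCuts ts).map fun qr => (pr.1 ++ qr.1, pr.2 ++ qr.2)
end
-- The coproduct of the doubling bialgebra at the level of cut trees:
-- `delta c` enumerates the admissible cuts `c'` of the pruning `s` of `c`,
-- returning the pair of cut trees representing `(t, P^{c'}(s))` and
-- `(R^{c'}(t), R^{c'}(s))`.
mutual
  def cutsP : CTree → List (CTree × CTree)
    | .node ts => (cutsPL ts).map fun pr => (.node pr.1, .node pr.2)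
  def cutsPL : List (Bool × CTree) → List (List (Bool × CTree) × List (Bool × CTree))
    | [] => [([], [])]
    | (_, c) :: ts =>
        (cutsPL ts).flatMap fun pr =>
          ((true, c) :: pr.1, pr.2) ::
            (cutsP c).map fun qr => ((false, qr.1) :: pr.1, (false, qr.2) :: pr.2)
end

mutual
  def delta : CTree → List (CTree × CTree)
    | .node ts => (deltaL ts).map fun pr => (.node pr.1, .node pr.2)
  def deltaL : List (Bool × CTree) → List (List (Bool × CTree) × List (Bool × CTree))
    | [] => [([], [])]
    | (b, c) :: ts =>
        (deltaL ts).flatMap fun pr =>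
          if b then
            ((true, c) :: pr.1, pr.2) ::
              (cutsP c).map fun qr => ((false, qr.1) :: pr.1, (true, qr.2) :: pr.2)
          else
            (delta c).map fun qr => ((false, qr.1) :: pr.1, (false, qr.2) :: pr.2)
end

/-- The Connes–Kreimer Hopf algebra of rooted trees `H = S(T)`,
with basis the forests (multisets of rooted trees). -/
abbrev HCK := AddMonoidAlgebra ℚ (Multiset TreeQ)

noncomputable def singleH (f : Multiset TreeQ) : HCK := AddMonoidAlgebra.single f 1

noncomputable def oneH : HCK := AddMonoidAlgebra.single 0 1

noncomputable def δH (t : RTree) : HCK := singleH {tq t}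

/-- The doubling bialgebra `D = S(V)`, with basis the multisets of
(isomorphism classes of admissibly) cut trees. -/
abbrev DD := AddMonoidAlgebra ℚ (Multiset CQ)

noncomputable def singleD (m : Multiset CQ) : DD := AddMonoidAlgebra.single m 1

noncomputable def δD (c : CTree) : DD := singleD {cq c}

noncomputable def cfq (f : List CTree) : Multiset CQ := (f.map cq : List CQ)

/-- Admissible-cut coproduct on `H`, on a single tree. -/
noncomputable def ΔT (t : RTree) : HCK ⊗[ℚ] HCK :=
  ((treeCuts t).map fun pr => singleH (forestQ pr.1) ⊗ₜ[ℚ] singleH (forestQ pr.2)).sum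

/-- Admissible-cut coproduct on `H`, as a linear map (multiplicative on forests). -/
noncomputable def ΔH : HCK →ₗ[ℚ] HCK ⊗[ℚ] HCK :=
  LinearMap.comp (g := (AddMonoidAlgebra.coeffLinearEquiv ℚ).toLinearMap) <| Finsupp.lsum ℚ fun m =>
    LinearMap.toSpanSingleton ℚ _ ((m.map fun q => ΔT q.out).prod)

/-- The coproduct of the doubling bialgebra on a single pair. -/
noncomputable def ΔVt (c : CTree) : DD ⊗[ℚ] DD :=
  ((delta c).map fun pr => δD pr.1 ⊗ₜ[ℚ] δD pr.2).sum

/-- The coproduct of the doubling bialgebra, as a linear map `D → D ⊗ D`. -/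
noncomputable def ΔD : DD →ₗ[ℚ] DD ⊗[ℚ] DD :=
  LinearMap.comp (g := (AddMonoidAlgebra.coeffLinearEquiv ℚ).toLinearMap) <| Finsupp.lsum ℚ fun m =>
    LinearMap.toSpanSingleton ℚ _ ((m.map fun q => ΔVt q.out).prod)

/-- The counit of the doubling bialgebra: `ε (t, s) = ε (s)`. -/
noncomputable def εD : DD →ₗ[ℚ] ℚ :=
  LinearMap.comp (g := (AddMonoidAlgebra.coeffLinearEquiv ℚ).toLinearMap) <| Finsupp.lsum ℚ fun m =>
    LinearMap.toSpanSingleton ℚ _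
      ((m.map fun q => if (Quotient.out q).pruneF.length = 0 then (1 : ℚ) else 0).prod)

/-- The unshuffling coproduct `Γ` of `H' = S(T)`. -/
noncomputable def ΓH : HCK →ₗ[ℚ] HCK ⊗[ℚ] HCK :=
  LinearMap.comp (g := (AddMonoidAlgebra.coeffLinearEquiv ℚ).toLinearMap) <| Finsupp.lsum ℚ fun m =>
    LinearMap.toSpanSingleton ℚ _
      (((Multiset.antidiagonal m).map fun pq => singleH pq.1 ⊗ₜ[ℚ] singleH pq.2).sum)

/-- The unshuffling coproduct `χ` of `D' = S(V)`. -/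
noncomputable def χD : DD →ₗ[ℚ] DD ⊗[ℚ] DD :=
  LinearMap.comp (g := (AddMonoidAlgebra.coeffLinearEquiv ℚ).toLinearMap) <| Finsupp.lsum ℚ fun m =>
    LinearMap.toSpanSingleton ℚ _
      (((Multiset.antidiagonal m).map fun pq => singleD pq.1 ⊗ₜ[ℚ] singleD pq.2).sum)

/-- The second projection `P₂ (t, s) = s`, as a linear map `D → H`. -/
noncomputable def P₂ : DD →ₗ[ℚ] HCK :=
  LinearMap.comp (g := (AddMonoidAlgebra.coeffLinearEquiv ℚ).toLinearMap) <| Finsupp.lsum ℚ fun m =>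
    LinearMap.toSpanSingleton ℚ _ (singleH ((m.map fun q => forestQ (Quotient.out q).pruneF).sum))
/-- Representative forest (list of planar trees) of a multiset of tree classes. -/
noncomputable def repT (m : Multiset TreeQ) : List RTree := m.toList.map Quotient.out

/-- A single tree acting by grafting on `H` (extended Oudom–Guin `▷` of a tree
on products: graft on one factor of each forest). -/
noncomputable def rrtrT (t : RTree) (x : HCK) : HCK :=
  x.coeff.sum fun m r => r • ((fgraftAll t (repT m)).map fun f => singleH (forestQ f)).sum

/-- The Oudom–Guin extension of the grafting pre-Lie product of rooted trees to
forests: `1 ▷ b = b`, `(x a) ▷ b = x ▷ (a ▷ b) - (x ▷ a) ▷ b`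
(defined with a fuel argument equal to the length of the forest). -/
noncomputable def rrtrL : ℕ → List RTree → HCK → HCK
  | _, [], x => x
  | 0, _ :: _, _ => 0
  | n + 1, t :: a, x =>
      rrtrT t (rrtrL n a x) - ((fgraftAll t a).map fun b => rrtrL n b x).sum

noncomputable def rrtrF (a : List RTree) (x : HCK) : HCK := rrtrL a.length a x

/-- The Oudom–Guin product `⋆` on `H' = S(T)`:
`a ⋆ b = Σ a⁽¹⁾ (a⁽²⁾ ▷ b)`. -/
noncomputable def starH (x y : HCK) : HCK :=
  x.coeff.sum fun m r =>
    r • ((Multiset.antidiagonal m).map fun pq => singleH pq.1 * rrtrF (repT pq.2) y).sum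

/-- The module of pairs of forests (first component ⊗ pruning component),
receiving both `D'` and the image of the map `α`. -/
abbrev WD := (Multiset TreeQ × Multiset TreeQ) →₀ ℚ

/-- `α ((f, s) ⊗ y) = (f ⋆ y, s)`. -/
noncomputable def alphaW (x : WD) (y : HCK) : WD :=
  x.sum fun p c =>
    c • Finsupp.mapDomain (fun g => (g, p.2)) (starH (singleH p.1) y).coeff

/-- Representative list of cut trees of a multiset of cut-tree classes. -/
noncomputable def repC (m : Multiset CQ) : List CTree := m.toList.map Quotient.out

/-- Graftings of a cut tree on one factor of a forest of cut trees, where the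
admitted grafting positions on each factor are prescribed by `g`. -/
def fgraftC (g : CTree → CTree → List CTree) (c : CTree) (f : List CTree) :
    List (List CTree) :=
  (List.range f.length).flatMap fun i =>
    (g c (f.getD i default)).map fun w => f.set i w

/-- all-vertex graftings of a cut tree on a cut tree (used for the `H'`-product
acting on the first components). -/
def dmulAll (c₁ c₂ : CTree) : List CTree :=
  (CTree.allPos c₂).map fun p => CTree.cgraft c₁ p c₂

noncomputable def singleDF (f : List CTree) : DD := singleD (cfq f)

/-- A single cut tree acting on `D` by `g`-grafting on one factor. -/
noncomputable def crtrT (g : CTree → CTree → List CTree) (c : CTree) (x : DD) : DD :=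
  x.coeff.sum fun m r => r • ((fgraftC g c (repC m)).map singleDF).sum

/-- Oudom–Guin extension of the `g`-grafting pre-Lie product to forests of cut
trees (fuel version). -/
noncomputable def crtrL (g : CTree → CTree → List CTree) : ℕ → List CTree → DD → DD
  | _, [], x => x
  | 0, _ :: _, _ => 0
  | n + 1, c :: a, x =>
      crtrT g c (crtrL g n a x) - ((fgraftC g c a).map fun b => crtrL g n b x).sum

noncomputable def crtrF (g : CTree → CTree → List CTree) (a : List CTree) (x : DD) : DD :=
  crtrL g a.length a x

/-- Oudom–Guin product on `S` of cut trees associated with the grafting rule `g`. -/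
noncomputable def starC (g : CTree → CTree → List CTree) (x y : DD) : DD :=
  x.coeff.sum fun m r =>
    r • ((Multiset.antidiagonal m).map fun pq => singleD pq.1 * crtrF g (repC pq.2) y).sum

/-- The Oudom–Guin product `★` of the doubling pre-Lie algebra `(V, ⤳)`. -/
noncomputable def starD : DD → DD → DD := starC dmul

/-- The Oudom–Guin product `⋆` of `(T, →)` acting on decorated elements
(grafting on all vertices). -/
noncomputable def starDAll : DD → DD → DD := starC dmulAll

/-- `H'` embedded in the decorated algebra (forests with no cut edge). -/
noncomputable def embedH (x : HCK) : DD :=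
  x.coeff.sum fun m r => AddMonoidAlgebra.single (m.map fun q => cq (CTree.ofTree (Quotient.out q))) r

/-- The action `α (x ⊗ y) = (t ⋆ y, s)` computed on decorated elements. -/
noncomputable def alphaD (x : DD) (y : HCK) : DD := starDAll x (embedH y)

/-- Projection of a decorated element onto the pair
`(underlying forest, total pruning)`. -/
noncomputable def πD : DD →ₗ[ℚ] WD :=
  LinearMap.comp (g := (AddMonoidAlgebra.coeffLinearEquiv ℚ).toLinearMap) <| Finsupp.lsum ℚ fun m =>
    LinearMap.toSpanSingleton ℚ _
      (Finsupp.single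
        (m.map fun q => tq (Quotient.out q).forget,
          (m.map fun q => forestQ (Quotient.out q).pruneF).sum) (1 : ℚ))


set_option maxHeartbeats 1000000 in
set_option synthInstance.maxHeartbeats 1000000 in
lemma singleD_zero_eq_one : singleD 0 = 1 := by
  rw [singleD, AddMonoidAlgebra.one_def]

set_option maxHeartbeats 1000000 in
set_option synthInstance.maxHeartbeats 1000000 in
lemma chiD_delta (x : CTree) :
    χD (δD x) = 1 ⊗ₜ[ℚ] δD x + δD x ⊗ₜ[ℚ] (1 : DD) := by
  rw [δD, singleD, χD]
  rw [LinearMap.comp_apply]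
  change (Finsupp.lsum ℚ _) (Finsupp.single _ _) = _
  erw [Finsupp.lsum_single]
  rw [LinearMap.toSpanSingleton_apply, one_smul]
  have : Multiset.antidiagonal ({cq x} : Multiset CQ) = {(0, {cq x}), ({cq x}, 0)} := by
    simp [Multiset.antidiagonal_cons]; rfl
  rw [this]
  simp [singleD, δD, AddMonoidAlgebra.one_def]

set_option maxHeartbeats 1000000 in
set_option synthInstance.maxHeartbeats 1000000 in
lemma deltaD_delta (x : CTree) :
    ΔD (δD x) = ΔVt (Quotient.out (cq x)) := by
  rw [δD, singleD, ΔD]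
  rw [LinearMap.comp_apply]
  change (Finsupp.lsum ℚ _) (Finsupp.single _ _) = _
  erw [Finsupp.lsum_single]
  rw [LinearMap.toSpanSingleton_apply, one_smul]
  simp

set_option maxHeartbeats 1000000 in
set_option synthInstance.maxHeartbeats 1000000 in
lemma deltaD_one : ΔD (1 : DD) = 1 ⊗ₜ[ℚ] (1 : DD) := by
  rw [← singleD_zero_eq_one, singleD, ΔD]
  rw [LinearMap.comp_apply]
  change (Finsupp.lsum ℚ _) (Finsupp.single _ _) = _
  erw [Finsupp.lsum_single]
  rw [LinearMap.toSpanSingleton_apply, one_smul]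
  simp [Algebra.TensorProduct.one_def, AddMonoidAlgebra.one_def]

set_option maxHeartbeats 1000000 in
set_option synthInstance.maxHeartbeats 1000000 in
lemma key_single (a b : CTree) :
    (TensorProduct.map LinearMap.id χD) (δD a ⊗ₜ[ℚ] δD b) =
      (TensorProduct.map (LinearMap.mul' ℚ DD) LinearMap.id)
          ((TensorProduct.tensorTensorTensorComm ℚ DD DD DD DD)
            (((1 : DD) ⊗ₜ[ℚ] (1 : DD)) ⊗ₜ[ℚ] (δD a ⊗ₜ[ℚ] δD b))) +
        (TensorProduct.map (LinearMap.mul' ℚ DD) LinearMap.id)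
          ((TensorProduct.tensorTensorTensorComm ℚ DD DD DD DD)
            ((δD a ⊗ₜ[ℚ] δD b) ⊗ₜ[ℚ] ((1 : DD) ⊗ₜ[ℚ] (1 : DD)))) := by
  rw [TensorProduct.map_tmul, LinearMap.id_apply, chiD_delta,
    TensorProduct.tensorTensorTensorComm_tmul, TensorProduct.tensorTensorTensorComm_tmul,
    TensorProduct.map_tmul, TensorProduct.map_tmul, LinearMap.mul'_apply,
    LinearMap.mul'_apply, LinearMap.id_apply, LinearMap.id_apply, one_mul, mul_one,
    TensorProduct.tmul_add]

set_option maxHeartbeats 1000000 in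
set_option synthInstance.maxHeartbeats 1000000 in
lemma key (l : List (CTree × CTree)) :
    (TensorProduct.map LinearMap.id χD)
        ((l.map fun pr => δD pr.1 ⊗ₜ[ℚ] δD pr.2).sum) =
      (TensorProduct.map (LinearMap.mul' ℚ DD) LinearMap.id)
        ((TensorProduct.tensorTensorTensorComm ℚ DD DD DD DD)
          (((1 : DD) ⊗ₜ[ℚ] (1 : DD)) ⊗ₜ[ℚ]
              ((l.map fun pr => δD pr.1 ⊗ₜ[ℚ] δD pr.2).sum) +
            ((l.map fun pr => δD pr.1 ⊗ₜ[ℚ] δD pr.2).sum) ⊗ₜ[ℚ]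
              ((1 : DD) ⊗ₜ[ℚ] (1 : DD)))) := by
  induction l with
  | nil => simp
  | cons p l ih =>
      simp only [List.map_cons, List.sum_cons, TensorProduct.tmul_add,
        TensorProduct.add_tmul, map_add] at ih ⊢
      rw [ih, key_single]
      abel

theorem doubling_comodule_coalgebra (c : CTree) (h : c.adm = true) :
    (TensorProduct.map LinearMap.id χD) (ΔD (δD c)) =
      (TensorProduct.map (LinearMap.mul' ℚ DD) LinearMap.id)
        ((TensorProduct.tensorTensorTensorComm ℚ DD DD DD DD)
          ((TensorProduct.map ΔD ΔD) (χD (δD c)))) := by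
  rw [chiD_delta, map_add, TensorProduct.map_tmul, TensorProduct.map_tmul,
    deltaD_one, deltaD_delta]
  simp only [ΔVt]
  exact key _
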